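/- Under the discrete-time minimum-consensus update rule x_i[k+1] = x_i[k] + min_{j ∈ N_i ∪ {i}} a_j^(k)·(x_j[k] − x_i[k]), with every weight satisfying δ ≤ a_j^(k) ≤ ā for constants 0 < δ ≤ ā < 1, every node's state converges as k → ∞ to the minimum of the initial states: lim_{k→∞} x_i[k] = min_{1 ≤ j ≤ n} x_j[0] for every node i. -/
import Mathlib


open Filter Topology

/-- Discrete-time minimum consensus: under the update rule
x_i[k+1] = x_i[k] + min_{j ∈ N_i ∪ {i}} a_j^(k)·(x_j[k] − x_i[k]) with all
weights in [δ, ā] for 0 < δ ≤ ā < 1, every node's state converges to the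
minimum of the initial states. -/
theorem dt_minimum_consensus
    (n : ℕ) (hn : 2 ≤ n)
    (G : SimpleGraph (Fin n)) [DecidableRel G.Adj]
    (hconn : G.Connected)
    (x : ℕ → Fin n → ℝ)
    (a : ℕ → Fin n → ℝ)
    (δ abar : ℝ) (hδ : 0 < δ) (hδa : δ ≤ abar) (habar : abar < 1)
    (hbound : ∀ k j, δ ≤ a k j ∧ a k j ≤ abar)
    (hdyn : ∀ i k, x (k + 1) i =
      x k i + (insert i (G.neighborFinset i)).inf'
        (Finset.insert_nonempty i _) (fun j => a k j * (x k j - x k i))) :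
    ∀ i, Tendsto (fun k => x k i) atTop
      (𝓝 (Finset.univ.inf' (Finset.univ_nonempty_iff.mpr ⟨⟨0, by omega⟩⟩)
            (fun j => x 0 j))) := by
  set m : ℝ := Finset.univ.inf' (Finset.univ_nonempty_iff.mpr ⟨⟨0, by omega⟩⟩)
      (fun j => x 0 j) with hm
  -- Step 1: lower bound m ≤ x k j for all k, j
  have hlow : ∀ k j, m ≤ x k j := by
    intro k
    induction k with
    | zero => intro j; exact Finset.inf'_le _ (Finset.mem_univ j)
    | succ k ih =>
      intro j
      obtain ⟨j0, hj0mem, hj0⟩ := Finset.exists_mem_eq_inf'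
        (Finset.insert_nonempty j (G.neighborFinset j))
        (fun l => a k l * (x k l - x k j))
      rw [hdyn j k, hj0]
      have h1 : δ ≤ a k j0 := (hbound k j0).1
      have h2 : a k j0 ≤ abar := (hbound k j0).2
      nlinarith [ih j, ih j0,
        mul_nonneg (by linarith : (0:ℝ) ≤ 1 - a k j0) (by linarith [ih j] : 0 ≤ x k j - m),
        mul_nonneg (by linarith : (0:ℝ) ≤ a k j0) (by linarith [ih j0] : 0 ≤ x k j0 - m)]
  -- Step 2: monotone decreasing
  have hdec : ∀ k j, x (k + 1) j ≤ x k j := by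
    intro k j
    have h := Finset.inf'_le (fun l => a k l * (x k l - x k j))
      (Finset.mem_insert_self j (G.neighborFinset j))
    rw [hdyn j k]
    simp only [sub_self, mul_zero] at h
    linarith
  have hanti : ∀ j, Antitone (fun k => x k j) := fun j =>
    antitone_nat_of_succ_le (fun k => hdec k j)
  have hbdd : ∀ j, BddBelow (Set.range (fun k => x k j)) := by
    intro j
    refine ⟨m, ?_⟩
    rintro y ⟨k, rfl⟩
    exact hlow k j
  have htend : ∀ j, Tendsto (fun k => x k j) atTop (𝓝 (⨅ k, x k j)) := fun j =>
    tendsto_atTop_ciInf (hanti j) (hbdd j)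
  -- Step 3: key contraction inequality along edges
  have hkey : ∀ k (i j : Fin n), j ∈ insert i (G.neighborFinset i) →
      x (k + 1) i ≤ (1 - δ) * x k i + δ * x k j := by
    intro k i j hj
    have h1 := Finset.inf'_le (fun l => a k l * (x k l - x k i)) hj
    have h2 : x (k + 1) i ≤ x k i + a k j * (x k j - x k i) := by
      rw [hdyn i k]; linarith
    have ha1 : δ ≤ a k j := (hbound k j).1
    rcases le_or_gt (x k j) (x k i) with hc | hc
    · have : a k j * (x k j - x k i) ≤ δ * (x k j - x k i) :=
        mul_le_mul_of_nonpos_right ha1 (by linarith)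
      nlinarith
    · have h3 := hdec k i
      nlinarith [mul_pos hδ (sub_pos.mpr hc)]
  -- Step 4: limits compare along edges
  have hLle : ∀ i j : Fin n, G.Adj i j → (⨅ k, x k i) ≤ ⨅ k, x k j := by
    intro i j hadj
    have h1 : Tendsto (fun k => x (k + 1) i) atTop (𝓝 (⨅ k, x k i)) :=
      (htend i).comp (tendsto_add_atTop_nat 1)
    have h2 : Tendsto (fun k => (1 - δ) * x k i + δ * x k j) atTop
        (𝓝 ((1 - δ) * (⨅ k, x k i) + δ * (⨅ k, x k j))) :=
      ((htend i).const_mul _).add ((htend j).const_mul _)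
    have h3 : (⨅ k, x k i) ≤ (1 - δ) * (⨅ k, x k i) + δ * (⨅ k, x k j) :=
      le_of_tendsto_of_tendsto' h1 h2 (fun k => hkey k i j
        (Finset.mem_insert_of_mem ((SimpleGraph.mem_neighborFinset G i j).mpr hadj)))
    nlinarith
  -- Step 5: a minimizer node stays at m
  obtain ⟨j0, _, hj0⟩ := Finset.exists_mem_eq_inf'
    (Finset.univ_nonempty_iff.mpr ⟨(⟨0, by omega⟩ : Fin n)⟩) (fun j => x 0 j)
  have hLj0 : (⨅ k, x k j0) = m := by
    refine le_antisymm ?_ (le_ciInf fun k => hlow k j0)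
    calc (⨅ k, x k j0) ≤ x 0 j0 := ciInf_le (hbdd j0) 0
    _ = m := by rw [hm, hj0]
  -- Step 6: connectivity
  have hwalk : ∀ (u v : Fin n), G.Walk u v → (⨅ k, x k u) ≤ ⨅ k, x k v := by
    intro u v p
    induction p with
    | nil => exact le_rfl
    | cons h _ ih => exact le_trans (hLle _ _ h) ih
  intro i
  have hLi : (⨅ k, x k i) = m := by
    refine le_antisymm ?_ (le_ciInf fun k => hlow k i)
    exact le_trans (hwalk i j0 (hconn i j0).some) hLj0.le
  have := htend i
  rwa [hLi] at this
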